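/- Define h(θ) = (cos θ + √3·sin θ + √(10 − cos(2θ) + √3·sin(2θ)))/(2√2). Then ∫₀^{π/3} (6h(θ)⁴ + 8√2·h(θ)³·cos θ + 3h(θ)²·(1 + cos(2θ)) + (3 + cos(2θ))) / (18π·(1 + h(θ)²)³) dθ = (1/24)·(1/3)·(1 + (3 + √3)/π). -/

import Mathlib

open Real

noncomputable def h (θ : ℝ) : ℝ :=
  (Real.cos θ + Real.sqrt 3 * Real.sin θ +
    Real.sqrt (10 - Real.cos (2 * θ) + Real.sqrt 3 * Real.sin (2 * θ))) / (2 * Real.sqrt 2)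

/-!
Put `u = θ - π/3` and `q = √(2 + cos² u)`. Then `√2 · h θ = cos u + q =: p`, and `q² - cos² u = 2`
makes `cos u` and `q` rational in `p`, so the integrand is a rational function of `p` and `cos θ`.
Modulo the relation `4 cos² θ - 4 cos u cos θ + 4 cos² u = 3` coming from `θ = u + π/3`, it is the
derivative of `(θ + sin 2θ / 6 + F (θ - π/3)) / (12π)`, where `F` combines `q` with
`arcsin (sin u / √3)` (whose derivative is `cos u / q`, as `3 - sin² u = q²`).
The theorem is then the fundamental theorem of calculus.
-/

noncomputable def sqrtTwoAddCosSq (u : ℝ) : ℝ := √(2 + cos u ^ 2)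

lemma sqrtTwoAddCosSq_sq (u : ℝ) : sqrtTwoAddCosSq u ^ 2 = 2 + cos u ^ 2 :=
  sq_sqrt (by positivity)

lemma sqrtTwoAddCosSq_pos (u : ℝ) : 0 < sqrtTwoAddCosSq u :=
  sqrt_pos.mpr (by positivity)

lemma hasDerivAt_sqrtTwoAddCosSq (u : ℝ) :
    HasDerivAt sqrtTwoAddCosSq (-(cos u * sin u) / sqrtTwoAddCosSq u) u := by
  have hinner : HasDerivAt (fun x => 2 + cos x ^ 2) (2 * cos u * -sin u) u := by
    simpa using ((hasDerivAt_cos u).pow 2).const_add 2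
  refine (hinner.sqrt (by positivity)).congr_deriv ?_
  rw [sqrtTwoAddCosSq]
  field_simp

lemma hasDerivAt_arcsin_sin_div_sqrt_three (u : ℝ) :
    HasDerivAt (fun x => arcsin (sin x / √3)) (cos u / sqrtTwoAddCosSq u) u := by
  have h3 : (1 : ℝ) < √3 := by
    rw [show (1 : ℝ) = √1 by simp]
    exact sqrt_lt_sqrt zero_le_one (by norm_num)
  have hlt : |sin u / √3| < 1 := by
    rw [abs_div, abs_of_pos (show (0 : ℝ) < √3 by positivity), div_lt_one (by positivity)]
    linarith [abs_sin_le_one u]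
  have hroot : √(1 - (sin u / √3) ^ 2) = sqrtTwoAddCosSq u / √3 := by
    have : 1 - (sin u / √3) ^ 2 = (2 + cos u ^ 2) / 3 := by
      rw [div_pow, sq_sqrt zero_le_three]
      linear_combination (-1 / 3 : ℝ) * sin_sq_add_cos_sq u
    rw [this, sqrt_div' _ zero_le_three, sqrtTwoAddCosSq]
  refine ((hasDerivAt_arcsin (abs_lt.mp hlt).1.ne' (abs_lt.mp hlt).2.ne).comp u
    ((hasDerivAt_sin u).div_const √3)).congr_deriv ?_
  have := sqrtTwoAddCosSq_pos u
  rw [hroot]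
  field_simp

noncomputable def radicalPrimitive (u : ℝ) : ℝ :=
  (sin u - √3 * cos u) * sqrtTwoAddCosSq u / 6 - arcsin (sin u / √3)
    + sin u / (2 * sqrtTwoAddCosSq u) + √3 * cos u / sqrtTwoAddCosSq u

lemma hasDerivAt_radicalPrimitive (u : ℝ) :
    HasDerivAt radicalPrimitive
      ((2 * sqrtTwoAddCosSq u ^ 4 * (2 * cos u - 2 * cos (u + π / 3))
        - sqrtTwoAddCosSq u ^ 2 * (11 * cos u - 4 * cos (u + π / 3))
        - 3 * cos u + 24 * cos (u + π / 3)) / (6 * sqrtTwoAddCosSq u ^ 3)) u := by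
  have hq := hasDerivAt_sqrtTwoAddCosSq u
  have hq0 := (sqrtTwoAddCosSq_pos u).ne'
  have hsum := (((((hasDerivAt_sin u).sub ((hasDerivAt_cos u).const_mul √3)).mul hq).div_const 6
    |>.sub (hasDerivAt_arcsin_sin_div_sqrt_three u)).add
    ((hasDerivAt_sin u).div (hq.const_mul 2) (by positivity))).add
    (((hasDerivAt_cos u).const_mul √3).div hq hq0)
  refine hsum.congr_deriv ?_
  simp only [Pi.sub_apply]
  rw [cos_add, cos_pi_div_three, sin_pi_div_three]
  field_simp
  rw [sqrtTwoAddCosSq_sq]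
  linear_combination (2 * cos u - 2 * cos u ^ 3) * sin_sq_add_cos_sq u

lemma radicalPrimitive_zero : radicalPrimitive 0 = 1 / 2 := by
  have hq : sqrtTwoAddCosSq 0 = √3 := by
    rw [sqrtTwoAddCosSq, cos_zero]; norm_num
  rw [radicalPrimitive, hq, sin_zero, cos_zero, zero_div, arcsin_zero]
  field_simp
  linear_combination (-2 * √3) * sq_sqrt (zero_le_three : (0 : ℝ) ≤ 3)

lemma radicalPrimitive_neg_pi_div_three : radicalPrimitive (-(π / 3)) = π / 6 - √3 / 12 := by
  have hq : sqrtTwoAddCosSq (-(π / 3)) = 3 / 2 := by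
    rw [sqrtTwoAddCosSq, cos_neg, cos_pi_div_three,
      show 2 + (1 / 2 : ℝ) ^ 2 = (3 / 2) ^ 2 by norm_num, sqrt_sq (by norm_num)]
  have harcsin : arcsin (sin (-(π / 3)) / √3) = -(π / 6) := by
    rw [sin_neg, sin_pi_div_three, show -(√3 / 2) / √3 = -(1 / 2) by field_simp, arcsin_neg,
      ← sin_pi_div_six, arcsin_sin (by linarith [pi_pos]) (by linarith [pi_pos])]
  rw [radicalPrimitive, hq, harcsin, sin_neg, cos_neg, sin_pi_div_three, cos_pi_div_three]
  ring

lemma sqrt_two_mul_h (θ : ℝ) :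
    √2 * h θ = cos (θ - π / 3) + sqrtTwoAddCosSq (θ - π / 3) := by
  have h3 : √3 ^ 2 = 3 := sq_sqrt zero_le_three
  have hrad : 10 - cos (2 * θ) + √3 * sin (2 * θ) = 2 ^ 2 * (2 + cos (θ - π / 3) ^ 2) := by
    rw [cos_two_mul, sin_two_mul, cos_sub, cos_pi_div_three, sin_pi_div_three]
    linear_combination (-3 : ℝ) * sin_sq_add_cos_sq θ - sin θ ^ 2 * h3
  have hlin : cos θ + √3 * sin θ = 2 * cos (θ - π / 3) := by
    rw [cos_sub, cos_pi_div_three, sin_pi_div_three]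
    ring
  rw [h, hrad, hlin, sqrt_mul (by norm_num), sqrt_sq zero_le_two, ← sqrtTwoAddCosSq]
  field_simp

noncomputable def tetraIntegrand (θ : ℝ) : ℝ :=
  (6 * h θ ^ 4 + 8 * √2 * h θ ^ 3 * cos θ + 3 * h θ ^ 2 * (1 + cos (2 * θ)) + (3 + cos (2 * θ)))
    / (18 * π * (1 + h θ ^ 2) ^ 3)

lemma continuous_tetraIntegrand : Continuous tetraIntegrand := by
  have hh : Continuous h := by unfold h; fun_prop
  exact Continuous.div (by fun_prop) (by fun_prop) fun θ => by positivity

lemma rational_integrand_identity {c q p C : ℝ} (hq0 : 0 < q) (hq : q ^ 2 = 2 + c ^ 2)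
    (hp : c + q = p) (hC : 4 * C ^ 2 - 4 * c * C + 4 * c ^ 2 = 3) :
    (6 * p ^ 4 + 16 * p ^ 3 * C + 12 * p ^ 2 * C ^ 2 + 8 * C ^ 2 + 8) / (9 * (p ^ 2 + 2) ^ 3)
      = (1 + C ^ 2) / 18
        + (2 * q ^ 4 * (2 * c - 2 * C) - q ^ 2 * (11 * c - 4 * C) - 3 * c + 24 * C)
          / (72 * q ^ 3) := by
  have hp0 : 0 < p := by nlinarith
  have hc : c = (p ^ 2 - 2) / (2 * p) := by
    field_simp
    linear_combination (-1 : ℝ) * hq + (p - c + q) * hp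
  have hq' : q = (p ^ 2 + 2) / (2 * p) := by
    field_simp
    linear_combination hq + (p + c - q) * hp
  subst hc hq'
  -- Both sides are quadratic in `C` and `hC` is monic in `C`: the multiplier is the difference
  -- of the `C ^ 2`-coefficients.
  linear_combination (norm := skip)
    ((12 * p ^ 2 + 8) / (9 * (p ^ 2 + 2) ^ 3) - 1 / 18) / 4 * hC
  field_simp
  ring

lemma tetraIntegrand_eq_rational (θ p : ℝ) (hp : √2 * h θ = p) :
    tetraIntegrand θ = (6 * p ^ 4 + 16 * p ^ 3 * cos θ + 12 * p ^ 2 * cos θ ^ 2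
      + 8 * cos θ ^ 2 + 8) / (9 * (p ^ 2 + 2) ^ 3) / π := by
  have hh2 : h θ ^ 2 = p ^ 2 / 2 := by
    rw [← hp, mul_pow, sq_sqrt zero_le_two]
    ring
  have hh3 : √2 * h θ ^ 3 = p ^ 3 / 2 := by
    rw [show √2 * h θ ^ 3 = (√2 * h θ) * h θ ^ 2 by ring, hp, hh2]
    ring
  have := pi_pos
  rw [tetraIntegrand, cos_two_mul, show h θ ^ 4 = (h θ ^ 2) ^ 2 by ring, mul_assoc 8, hh3, hh2]
  field_simp
  ring

noncomputable def tetraPrimitive (θ : ℝ) : ℝ :=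
  (θ + sin (2 * θ) / 6 + radicalPrimitive (θ - π / 3)) / (12 * π)

lemma hasDerivAt_tetraPrimitive (θ : ℝ) : HasDerivAt tetraPrimitive (tetraIntegrand θ) θ := by
  have hcos : 4 * cos θ ^ 2 - 4 * cos (θ - π / 3) * cos θ + 4 * cos (θ - π / 3) ^ 2 = 3 := by
    obtain ⟨u, rfl⟩ : ∃ u, θ = u + π / 3 := ⟨θ - π / 3, by ring⟩
    rw [add_sub_cancel_right, cos_add, cos_pi_div_three, sin_pi_div_three]
    linear_combination 3 * sin_sq_add_cos_sq u + sin u ^ 2 * sq_sqrt zero_le_three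
  have hsin2 := ((hasDerivAt_sin _).comp θ ((hasDerivAt_id' θ).const_mul 2)).div_const 6
  have hF := (hasDerivAt_radicalPrimitive _).comp θ ((hasDerivAt_id' θ).sub_const (π / 3))
  refine ((((hasDerivAt_id' θ).add hsin2).add hF).div_const (12 * π)).congr_deriv ?_
  rw [tetraIntegrand_eq_rational θ _ (sqrt_two_mul_h θ),
    rational_integrand_identity (sqrtTwoAddCosSq_pos _) (sqrtTwoAddCosSq_sq _) rfl hcos,
    sub_add_cancel, cos_two_mul]
  have := pi_pos
  have := sqrtTwoAddCosSq_pos (θ - π / 3)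
  field_simp
  ring

/-- The outer integral over `θ ∈ [0, π/3]` evaluates to `1/24` of the mean square width
`(1/3)(1 + (3+√3)/π)` of the unit-edge regular tetrahedron. -/
theorem tetra_outer_integral :
    ∫ θ in (0:ℝ)..(π / 3),
      (6 * h θ ^ 4 + 8 * Real.sqrt 2 * h θ ^ 3 * Real.cos θ
          + 3 * h θ ^ 2 * (1 + Real.cos (2 * θ)) + (3 + Real.cos (2 * θ)))
        / (18 * π * (1 + h θ ^ 2) ^ 3)
      = (1/24) * ((1/3) * (1 + (3 + Real.sqrt 3) / π)) := by
  change ∫ θ in (0:ℝ)..(π / 3), tetraIntegrand θ = _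
  rw [intervalIntegral.integral_eq_sub_of_hasDerivAt (fun θ _ => hasDerivAt_tetraPrimitive θ)
    (continuous_tetraIntegrand.intervalIntegrable _ _)]
  have hsin : sin (2 * (π / 3)) = √3 / 2 := by
    rw [show 2 * (π / 3) = π - π / 3 by ring, sin_pi_sub, sin_pi_div_three]
  rw [tetraPrimitive, tetraPrimitive, sub_self, zero_sub, radicalPrimitive_zero,
    radicalPrimitive_neg_pi_div_three, hsin, mul_zero, sin_zero]
  have := pi_pos
  field_simp
  ring
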